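/- arXiv:math/0512363 — 3 statements merged into one kernel-verified Lean document; each statement's English description precedes it below -/
import Mathlib

section
/- For all positive integers s, r with r ≥ s ≥ 2 and r ≤ 2s − 2, the minimum n such that every 2-coloring Δ : [1,n] → {0,1} admits subsets S₁, S₂ ⊆ [1,n] that are each monochromatic, with |S₁| = s, |S₂| = r, max(S₁) < min(S₂), and diam(S₁) ≤ diam(S₂), equals 4s + r − 3. -/
open Finset

/-- diameter of a finite set of naturals -/
def diam (S : Finset ℕ) : ℕ := (S.max.getD 0) - (S.min.getD 0)

/-- S is monochromatic under a coloring -/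
def Mono {α : Type*} (f : ℕ → α) (S : Finset ℕ) : Prop := ∀ a ∈ S, ∀ b ∈ S, f a = f b

/-- S is zero-sum mod m under an integer coloring -/
def ZeroSum (f : ℕ → ℤ) (m : ℕ) (S : Finset ℕ) : Prop := (m : ℤ) ∣ ∑ x ∈ S, f x

/-- every element of S colored ∞ (= none) -/
def InftyMono (f : ℕ → Option ℤ) (S : Finset ℕ) : Prop := ∀ x ∈ S, f x = none

/-- S consists of ℤ-colored elements and is zero-sum mod m -/
def ZeroSumOpt (f : ℕ → Option ℤ) (m : ℕ) (S : Finset ℕ) : Prop :=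
  (∀ x ∈ S, (f x).isSome) ∧ (m : ℤ) ∣ ∑ x ∈ S, (f x).getD 0


lemma diam_eq (S : Finset ℕ) (h : S.Nonempty) : diam S = S.max' h - S.min' h := by
  unfold diam
  rw [← Finset.coe_max' h, ← Finset.coe_min' h]
  rfl

lemma diam_le_of_subset_Icc {S : Finset ℕ} {a b : ℕ} (h : S ⊆ Finset.Icc a b) :
    diam S ≤ b - a := by
  rcases S.eq_empty_or_nonempty with rfl | hS
  · have : diam (∅ : Finset ℕ) = 0 := by rfl
    omega
  · rw [diam_eq S hS]
    have h1 := h (S.max'_mem hS)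
    have h2 := h (S.min'_mem hS)
    rw [Finset.mem_Icc] at h1 h2
    omega

lemma card_le_diam {S : Finset ℕ} (h : S.Nonempty) : S.card ≤ diam S + 1 := by
  have hsub : S ⊆ Finset.Icc (S.min' h) (S.max' h) := by
    intro x hx
    rw [Finset.mem_Icc]
    exact ⟨S.min'_le x hx, S.le_max' x hx⟩
  have := Finset.card_le_card hsub
  rw [Nat.card_Icc] at this
  rw [diam_eq S h]
  omega

lemma filter_card_two (Δ : ℕ → Fin 2) (T : Finset ℕ) :
    (T.filter (fun x => Δ x = 0)).card + (T.filter (fun x => Δ x = 1)).card = T.card := by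
  have h : T.filter (fun x => Δ x = 1) = T.filter (fun x => ¬ Δ x = 0) :=
    Finset.filter_congr (fun x _ => (by decide : ∀ v : Fin 2, v = 1 ↔ ¬ v = 0) (Δ x))
  rw [h]
  exact Finset.card_filter_add_card_filter_not _

lemma fin2 (c : Fin 2) : c = 0 ∨ c = 1 := by fin_cases c <;> simp

lemma upper (s r : ℕ) (hs : 2 ≤ s) (hsr : s ≤ r) (hr : r ≤ 2 * s - 2) (Δ : ℕ → Fin 2) :
    ∃ S₁ S₂ : Finset ℕ,
    S₁ ⊆ Finset.Icc 1 (4 * s + r - 3) ∧ S₂ ⊆ Finset.Icc 1 (4 * s + r - 3) ∧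
    Mono Δ S₁ ∧ Mono Δ S₂ ∧ S₁.card = s ∧ S₂.card = r ∧
    (∀ a ∈ S₁, ∀ b ∈ S₂, a < b) ∧ diam S₁ ≤ diam S₂ := by
  set n := 4 * s + r - 3 with hn
  set T : Finset ℕ := Finset.Icc (2 * s) n with hT
  set A : Fin 2 → Finset ℕ := fun c => T.filter (fun x => Δ x = c) with hA
  have hsubT : ∀ c, A c ⊆ T := fun c => Finset.filter_subset _ _
  have hmemA : ∀ c x, x ∈ A c ↔ (x ∈ T ∧ Δ x = c) := fun c x => Finset.mem_filter
  have hTcard : T.card = 2 * s + r - 2 := by rw [hT, Nat.card_Icc]; omega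
  have hsum : (A 0).card + (A 1).card = 2 * s + r - 2 := by
    rw [← hTcard]; exact filter_card_two Δ T
  have hpig : ∃ c, r ≤ (A c).card := by
    by_contra hcon
    push_neg at hcon
    have h0 := hcon 0
    have h1 := hcon 1
    omega
  have hPcard : (Finset.Icc 1 (2 * s - 1)).card = 2 * s - 1 := by rw [Nat.card_Icc]; omega
  have hPsum := filter_card_two Δ (Finset.Icc 1 (2 * s - 1))
  by_cases hcase : ∃ c : Fin 2, r ≤ (A c).card ∧ ∃ u ∈ A c, ∃ v ∈ A c, u + (2 * s - 2) ≤ v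
  · -- Case A: some tail color has r elements and span ≥ 2s-2
    obtain ⟨c, hcr, u, hu, v, hv, huv⟩ := hcase
    obtain ⟨γ, hγ⟩ : ∃ γ : Fin 2, s ≤ ((Finset.Icc 1 (2 * s - 1)).filter (fun x => Δ x = γ)).card := by
      by_contra hcon
      push_neg at hcon
      have h0 := hcon 0
      have h1 := hcon 1
      rw [hPcard] at hPsum
      omega
    obtain ⟨S₁, hS₁sub, hS₁card⟩ := Finset.exists_subset_card_eq hγ
    have huv2 : ({u, v} : Finset ℕ) ⊆ A c := by
      intro x hx
      rcases Finset.mem_insert.1 hx with rfl | hx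
      · exact hu
      · rw [Finset.mem_singleton] at hx; subst hx; exact hv
    have hcard2 : ({u, v} : Finset ℕ).card ≤ r := by
      have := Finset.card_insert_le u ({v} : Finset ℕ)
      simp only [Finset.card_singleton] at this
      omega
    obtain ⟨S₂, hS₂sup, hS₂sub, hS₂card⟩ :=
      Finset.exists_subsuperset_card_eq huv2 hcard2 hcr
    have hS₁P : S₁ ⊆ Finset.Icc 1 (2 * s - 1) := hS₁sub.trans (Finset.filter_subset _ _)
    have hS₂T : S₂ ⊆ T := hS₂sub.trans (hsubT c)
    have hS₂ne : S₂.Nonempty := by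
      rw [← Finset.card_pos, hS₂card]; omega
    have hS₁ne : S₁.Nonempty := by
      rw [← Finset.card_pos, hS₁card]; omega
    refine ⟨S₁, S₂, ?_, ?_, ?_, ?_, hS₁card, hS₂card, ?_, ?_⟩
    · exact hS₁P.trans (Finset.Icc_subset_Icc (le_refl 1) (by omega))
    · exact hS₂T.trans (hT ▸ Finset.Icc_subset_Icc (by omega) (le_refl n))
    · intro a ha b hb
      have h1 := (Finset.mem_filter.1 (hS₁sub ha)).2
      have h2 := (Finset.mem_filter.1 (hS₁sub hb)).2
      rw [h1, h2]
    · intro a ha b hb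
      have h1 := (hmemA c a).1 (hS₂sub ha)
      have h2 := (hmemA c b).1 (hS₂sub hb)
      rw [h1.2, h2.2]
    · intro a ha b hb
      have h1 := Finset.mem_Icc.1 (hS₁P ha)
      have h2 := Finset.mem_Icc.1 (hT ▸ hS₂T hb)
      omega
    · have hd1 : diam S₁ ≤ 2 * s - 2 := by
        have := diam_le_of_subset_Icc hS₁P
        omega
      have hd2 : 2 * s - 2 ≤ diam S₂ := by
        rw [diam_eq S₂ hS₂ne]
        have hu' : u ∈ S₂ := hS₂sup (Finset.mem_insert_self u _)
        have hv' : v ∈ S₂ := hS₂sup (by simp)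
        have h1 := S₂.min'_le u hu'
        have h2 := S₂.le_max' v hv'
        omega
      omega
  · -- Case B: every tail color with ≥ r elements is confined
    push_neg at hcase
    have hconf : ∀ c, r ≤ (A c).card → (A c).card ≤ 2 * s - 2 := by
      intro c hc
      have hne : (A c).Nonempty := by rw [← Finset.card_pos]; omega
      have hsub2 : A c ⊆ Finset.Icc ((A c).min' hne) ((A c).min' hne + (2 * s - 3)) := by
        intro x hx
        rw [Finset.mem_Icc]
        refine ⟨(A c).min'_le x hx, ?_⟩
        have := hcase c hc ((A c).min' hne) ((A c).min'_mem hne) x hx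
        omega
      have := Finset.card_le_card hsub2
      rw [Nat.card_Icc] at this
      omega
    have h0card : r ≤ (A 0).card := by
      obtain ⟨c, hc⟩ := hpig
      have := hconf c hc
      rcases fin2 c with rfl | rfl <;> omega
    have h1card : r ≤ (A 1).card := by
      have := hconf 0 h0card
      omega
    have hallcard : ∀ c, r ≤ (A c).card := by
      intro c; rcases fin2 c with rfl | rfl <;> assumption
    have h2sT : (2 * s) ∈ T := by rw [hT, Finset.mem_Icc]; omega
    have hnT : n ∈ T := by rw [hT, Finset.mem_Icc]; omega
    have h2sA : 2 * s ∈ A (Δ (2 * s)) := by rw [hmemA]; exact ⟨h2sT, rfl⟩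
    have hnA : n ∈ A (Δ n) := by rw [hmemA]; exact ⟨hnT, rfl⟩
    have hαβ : Δ (2 * s) ≠ Δ n := by
      intro h
      have := hcase (Δ n) (hallcard _) (2 * s) (h ▸ h2sA) n hnA
      omega
    have hβlow : ∀ x ∈ A (Δ n), 2 * s + r ≤ x := by
      intro x hx
      have := hcase (Δ n) (hallcard _) x hx n hnA
      omega
    obtain ⟨S₂, hS₂sub, hS₂card⟩ := Finset.exists_subset_card_eq (hallcard (Δ n))
    have hS₁card : (Finset.Icc (2 * s) (3 * s - 1)).card = s := by rw [Nat.card_Icc]; omega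
    have hS₁mono : ∀ x ∈ Finset.Icc (2 * s) (3 * s - 1), Δ x = Δ (2 * s) := by
      intro x hx
      rw [Finset.mem_Icc] at hx
      have hxT : x ∈ T := by rw [hT, Finset.mem_Icc]; omega
      rcases fin2 (Δ x) with h | h <;> rcases fin2 (Δ (2 * s)) with h2 | h2 <;>
        rcases fin2 (Δ n) with h3 | h3 <;> rw [h, h2] <;> first
      | rfl
      | (exfalso; exact hαβ (h2.trans h3.symm))
      | (exfalso
         have hxβ : x ∈ A (Δ n) := by rw [hmemA]; exact ⟨hxT, by rw [h, h3]⟩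
         have := hβlow x hxβ
         omega)
    have hS₂low : ∀ x ∈ S₂, 2 * s + r ≤ x := fun x hx => hβlow x (hS₂sub hx)
    have hS₂ne : S₂.Nonempty := by rw [← Finset.card_pos, hS₂card]; omega
    refine ⟨Finset.Icc (2 * s) (3 * s - 1), S₂, ?_, ?_, ?_, ?_, hS₁card, hS₂card, ?_, ?_⟩
    · exact Finset.Icc_subset_Icc (by omega) (by omega)
    · exact (hS₂sub.trans (hsubT _)).trans (hT ▸ Finset.Icc_subset_Icc (by omega) (le_refl n))
    · intro a ha b hb
      rw [hS₁mono a ha, hS₁mono b hb]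
    · intro a ha b hb
      have h1 := ((hmemA _ a).1 (hS₂sub ha)).2
      have h2 := ((hmemA _ b).1 (hS₂sub hb)).2
      rw [h1, h2]
    · intro a ha b hb
      rw [Finset.mem_Icc] at ha
      have := hS₂low b hb
      omega
    · have hd1 : diam (Finset.Icc (2 * s) (3 * s - 1)) ≤ s - 1 := by
        have := diam_le_of_subset_Icc (le_refl (Finset.Icc (2 * s) (3 * s - 1)))
        omega
      have hd2 : r - 1 ≤ diam S₂ := by
        have := card_le_diam hS₂ne
        omega
      omega

def del (s : ℕ) : ℕ → Fin 2 :=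
  fun x => if x ≤ s - 1 ∨ (2 * s - 1 ≤ x ∧ x ≤ 4 * s - 3) then 0 else 1

lemma del0 (s x : ℕ) : del s x = 0 ↔ (x ≤ s - 1 ∨ (2 * s - 1 ≤ x ∧ x ≤ 4 * s - 3)) := by
  unfold del
  split_ifs with h
  · exact iff_of_true rfl h
  · exact iff_of_false (by decide) h

lemma del1 (s x : ℕ) : del s x = 1 ↔ ¬(x ≤ s - 1 ∨ (2 * s - 1 ≤ x ∧ x ≤ 4 * s - 3)) := by
  unfold del
  split_ifs with h
  · exact iff_of_false (by decide) (not_not_intro h)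
  · exact iff_of_true rfl h

lemma lower (s r : ℕ) (hs : 2 ≤ s) (hsr : s ≤ r) (hr : r ≤ 2 * s - 2) (n : ℕ)
    (hn : n ≤ 4 * s + r - 4) (S₁ S₂ : Finset ℕ)
    (hsub1 : S₁ ⊆ Finset.Icc 1 n) (hsub2 : S₂ ⊆ Finset.Icc 1 n)
    (hm1 : Mono (del s) S₁) (hm2 : Mono (del s) S₂)
    (hc1 : S₁.card = s) (hc2 : S₂.card = r)
    (hord : ∀ a ∈ S₁, ∀ b ∈ S₂, a < b) (hd : diam S₁ ≤ diam S₂) : False := by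
  have hS₁ne : S₁.Nonempty := by rw [← Finset.card_pos, hc1]; omega
  have hS₂ne : S₂.Nonempty := by rw [← Finset.card_pos, hc2]; omega
  have hordM : ∀ b ∈ S₂, (S₁.max' hS₁ne) < b := fun b hb => hord (S₁.max' hS₁ne) (S₁.max'_mem hS₁ne) b hb
  have hbound1 : ∀ a ∈ S₁, 1 ≤ a ∧ a ≤ n := by
    intro a ha; have := Finset.mem_Icc.1 (hsub1 ha); omega
  have hbound2 : ∀ b ∈ S₂, 1 ≤ b ∧ b ≤ n := by
    intro b hb; have := Finset.mem_Icc.1 (hsub2 hb); omega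
  -- color of S₁ and S₂
  have hm1pos : 1 ≤ S₁.min' hS₁ne := (hbound1 _ (S₁.min'_mem hS₁ne)).1
  have hcol1 : ∀ a ∈ S₁, del s a = del s (S₁.min' hS₁ne) := fun a ha => hm1 a ha (S₁.min' hS₁ne) (S₁.min'_mem hS₁ne)
  have hcol2 : ∀ b ∈ S₂, del s b = del s (S₂.min' hS₂ne) := fun b hb => hm2 b hb (S₂.min' hS₂ne) (S₂.min'_mem hS₂ne)
  have hdiam1 : diam S₁ = (S₁.max' hS₁ne) - (S₁.min' hS₁ne) := diam_eq S₁ hS₁ne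
  have hdiam2 : diam S₂ = (S₂.max' hS₂ne) - (S₂.min' hS₂ne) := diam_eq S₂ hS₂ne
  have hm₁M₁ : (S₁.min' hS₁ne) ≤ (S₁.max' hS₁ne) := S₁.min'_le (S₁.max' hS₁ne) (S₁.max'_mem hS₁ne)
  have hm₂M₂ : (S₂.min' hS₂ne) ≤ (S₂.max' hS₂ne) := S₂.min'_le (S₂.max' hS₂ne) (S₂.max'_mem hS₂ne)
  have hcard1 : s ≤ (S₁.max' hS₁ne) + 1 - (S₁.min' hS₁ne) := by
    have hsub : S₁ ⊆ Finset.Icc (S₁.min' hS₁ne) (S₁.max' hS₁ne) := fun x hx =>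
      Finset.mem_Icc.2 ⟨S₁.min'_le x hx, S₁.le_max' x hx⟩
    have := Finset.card_le_card hsub
    rw [Nat.card_Icc] at this
    omega
  rcases fin2 (del s (S₂.min' hS₂ne)) with hcβ | hcβ
  · -- S₂ has color 0
    by_cases hA : ∃ y ∈ S₂, y ≤ s - 1
    · obtain ⟨y, hy, hys⟩ := hA
      have hsubS₁ : S₁ ⊆ Finset.Icc 1 (s - 2) := by
        intro a ha
        have := hord a ha y hy
        have := (hbound1 a ha).1
        exact Finset.mem_Icc.2 (by omega)
      have := Finset.card_le_card hsubS₁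
      rw [Nat.card_Icc, hc1] at this
      omega
    · push_neg at hA
      have hS₂C : ∀ y ∈ S₂, 2 * s - 1 ≤ y ∧ y ≤ 4 * s - 3 := by
        intro y hy
        have h := (del0 s y).1 (by rw [hcol2 y hy]; exact hcβ)
        have := hA y hy
        omega
      have hm₂C := hS₂C (S₂.min' hS₂ne) (S₂.min'_mem hS₂ne)
      have hM₂C := hS₂C (S₂.max' hS₂ne) (S₂.max'_mem hS₂ne)
      have hM₁m₂ : (S₁.max' hS₁ne) < (S₂.min' hS₂ne) := hordM (S₂.min' hS₂ne) (S₂.min'_mem hS₂ne)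
      rcases fin2 (del s (S₁.min' hS₁ne)) with hcα | hcα
      · -- S₁ color 0
        have hchar : ∀ a ∈ S₁, a ≤ s - 1 ∨ (2 * s - 1 ≤ a ∧ a ≤ 4 * s - 3) := by
          intro a ha
          exact (del0 s a).1 (by rw [hcol1 a ha]; exact hcα)
        set k := (S₁.filter (fun a => a ≤ s - 1)).card with hk
        have hsplit : k + (S₁.filter (fun a => ¬ a ≤ s - 1)).card = s := by
          rw [hk, Finset.card_filter_add_card_filter_not, hc1]
        have hklow : k ≤ s - (S₁.min' hS₁ne) := by
          have hsub : S₁.filter (fun a => a ≤ s - 1) ⊆ Finset.Icc (S₁.min' hS₁ne) (s - 1) := by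
            intro a ha
            rw [Finset.mem_filter] at ha
            exact Finset.mem_Icc.2 ⟨S₁.min'_le a ha.1, by omega⟩
          have := Finset.card_le_card hsub
          rw [Nat.card_Icc] at this
          omega
        have hCpart : (S₁.filter (fun a => ¬ a ≤ s - 1)).card ≤ (S₁.max' hS₁ne) + 1 - (2 * s - 1) := by
          have hsub : S₁.filter (fun a => ¬ a ≤ s - 1) ⊆ Finset.Icc (2 * s - 1) (S₁.max' hS₁ne) := by
            intro a ha
            rw [Finset.mem_filter] at ha
            have := hchar a ha.1
            have := S₁.le_max' a ha.1
            exact Finset.mem_Icc.2 (by omega)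
          have := Finset.card_le_card hsub
          rw [Nat.card_Icc] at this
          omega
        rcases Nat.eq_zero_or_pos k with hk0 | hkpos
        · have hm₁C : 2 * s - 1 ≤ (S₁.min' hS₁ne) := by
            have hmem : (S₁.min' hS₁ne) ∈ S₁.filter (fun a => ¬ a ≤ s - 1) := by
              rw [Finset.mem_filter]
              refine ⟨S₁.min'_mem hS₁ne, ?_⟩
              intro hcon
              have : (S₁.min' hS₁ne) ∈ S₁.filter (fun a => a ≤ s - 1) :=
                Finset.mem_filter.2 ⟨S₁.min'_mem hS₁ne, hcon⟩
              have := Finset.card_pos.2 ⟨(S₁.min' hS₁ne), this⟩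
              omega
            rw [Finset.mem_filter] at hmem
            have hm₁1 := (hbound1 (S₁.min' hS₁ne) (S₁.min'_mem hS₁ne)).1
            omega
          omega
        · omega
      · -- S₁ color 1
        have hchar : ∀ a ∈ S₁, s ≤ a ∧ (a ≤ 2 * s - 2 ∨ 4 * s - 2 ≤ a) := by
          intro a ha
          have h := (del1 s a).1 (by rw [hcol1 a ha]; exact hcα)
          push_neg at h
          omega
        have hsubS₁ : S₁ ⊆ Finset.Icc s (2 * s - 2) := by
          intro a ha
          have h := hchar a ha
          have h2 := hord a ha (S₂.min' hS₂ne) (S₂.min'_mem hS₂ne)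
          exact Finset.mem_Icc.2 (by omega)
        have := Finset.card_le_card hsubS₁
        rw [Nat.card_Icc, hc1] at this
        omega
  · -- S₂ has color 1
    have hDcard : (S₂.filter (fun y => 4 * s - 2 ≤ y)).card ≤ r - 1 := by
      have hsub : S₂.filter (fun y => 4 * s - 2 ≤ y) ⊆ Finset.Icc (4 * s - 2) (4 * s + r - 4) := by
        intro y hy
        rw [Finset.mem_filter] at hy
        have := (hbound2 y hy.1).2
        exact Finset.mem_Icc.2 (by omega)
      have := Finset.card_le_card hsub
      rw [Nat.card_Icc] at this
      omega
    obtain ⟨y, hy, hyD⟩ : ∃ y ∈ S₂, ¬ 4 * s - 2 ≤ y := by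
      by_contra hcon
      push_neg at hcon
      have : S₂.filter (fun y => 4 * s - 2 ≤ y) = S₂ :=
        Finset.filter_eq_self.2 hcon
      rw [this, hc2] at hDcard
      omega
    have hyB : s ≤ y ∧ y ≤ 2 * s - 2 := by
      have h := (del1 s y).1 (by rw [hcol2 y hy]; exact hcβ)
      push_neg at h
      omega
    rcases fin2 (del s (S₁.min' hS₁ne)) with hcα | hcα
    · -- S₁ color 0: S₁ ⊆ [1, s-1]
      have hsubS₁ : S₁ ⊆ Finset.Icc 1 (s - 1) := by
        intro a ha
        have h := (del0 s a).1 (by rw [hcol1 a ha]; exact hcα)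
        have h2 := hord a ha y hy
        have h3 := (hbound1 a ha).1
        exact Finset.mem_Icc.2 (by omega)
      have := Finset.card_le_card hsubS₁
      rw [Nat.card_Icc, hc1] at this
      omega
    · -- S₁ color 1: S₁ ⊆ [s, 2s-3]
      have hsubS₁ : S₁ ⊆ Finset.Icc s (2 * s - 3) := by
        intro a ha
        have h := (del1 s a).1 (by rw [hcol1 a ha]; exact hcα)
        push_neg at h
        have h2 := hord a ha y hy
        exact Finset.mem_Icc.2 (by omega)
      have := Finset.card_le_card hsubS₁
      rw [Nat.card_Icc, hc1] at this
      omega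

theorem stmt0 (s r : ℕ) (hs : 2 ≤ s) (hsr : s ≤ r) (hr : r ≤ 2 * s - 2) :
    IsLeast {n : ℕ | ∀ Δ : ℕ → Fin 2, ∃ S₁ S₂ : Finset ℕ,
    S₁ ⊆ Finset.Icc 1 n ∧ S₂ ⊆ Finset.Icc 1 n ∧
    Mono Δ S₁ ∧ Mono Δ S₂ ∧ S₁.card = s ∧ S₂.card = r ∧
    (∀ a ∈ S₁, ∀ b ∈ S₂, a < b) ∧ diam S₁ ≤ diam S₂} (4 * s + r - 3) := by
  constructor
  · intro Δ
    exact upper s r hs hsr hr Δ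
  · intro n hnmem
    by_contra hlt
    push_neg at hlt
    obtain ⟨S₁, S₂, h1, h2, hm1, hm2, hc1, hc2, hord, hd⟩ := hnmem (del s)
    exact lower s r hs hsr hr n (by omega) S₁ S₂ h1 h2 hm1 hm2 hc1 hc2 hord hd
end

section
/- For integers r ≥ s ≥ 3 with 2s − 2 < r ≤ 3s − 3, the minimum n such that every 3-coloring of [1,n] admits monochromatic subsets S₁, S₂ with |S₁| = s, |S₂| = r, max(S₁) < min(S₂), and diam(S₁) ≤ diam(S₂), equals 6s + 2r − 6. -/
open Finset

lemma diam_eq_s9 {U : Finset ℕ} (h : U.Nonempty) : diam U = U.max' h - U.min' h := by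
  rw [diam, ← Finset.coe_max' h, ← Finset.coe_min' h]; rfl

def dbad (s r x : ℕ) : Fin 3 :=
  if x < s then 0 else if x < 2*s-1 then 1 else if x < 3*s-2 then 2
  else if x < 6*s-4 then 0 else if x < 6*s+r-5 then 1 else 2

lemma dbad_eq0 {s r : ℕ} (hs : 3 ≤ s) (hr : 2*s ≤ r+1) (x : ℕ) :
    dbad s r x = 0 ↔ (x < s ∨ (3*s-2 ≤ x ∧ x < 6*s-4)) := by
  unfold dbad; split_ifs with h1 h2 h3 h4 h5 <;> simp [Fin.ext_iff] <;> omega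

lemma dbad_eq1 {s r : ℕ} (hs : 3 ≤ s) (hr : 2*s ≤ r+1) (x : ℕ) :
    dbad s r x = 1 ↔ ((s ≤ x ∧ x < 2*s-1) ∨ (6*s-4 ≤ x ∧ x < 6*s+r-5)) := by
  unfold dbad; split_ifs with h1 h2 h3 h4 h5 <;> simp [Fin.ext_iff] <;> omega

lemma dbad_eq2 {s r : ℕ} (hs : 3 ≤ s) (hr : 2*s ≤ r+1) (x : ℕ) :
    dbad s r x = 2 ↔ ((2*s-1 ≤ x ∧ x < 3*s-2) ∨ 6*s+r-5 ≤ x) := by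
  unfold dbad; split_ifs with h1 h2 h3 h4 h5 <;> simp [Fin.ext_iff] <;> omega

lemma card_le_of_Icc {S : Finset ℕ} {lo hi : ℕ} (h : S ⊆ Finset.Icc lo hi) :
    S.card ≤ hi + 1 - lo := by
  have := Finset.card_le_card h; rwa [Nat.card_Icc] at this

lemma lower_no_pair (s r n : ℕ) (hs : 3 ≤ s) (hr1 : 2*s ≤ r+1) (hn : n ≤ 6*s+2*r-7)
    (S₁ S₂ : Finset ℕ) (h1 : S₁ ⊆ Finset.Icc 1 n) (h2 : S₂ ⊆ Finset.Icc 1 n)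
    (m1 : Mono (dbad s r) S₁) (m2 : Mono (dbad s r) S₂)
    (c1 : S₁.card = s) (c2 : S₂.card = r)
    (hlt : ∀ a ∈ S₁, ∀ b ∈ S₂, a < b) (hd : diam S₁ ≤ diam S₂) : False := by
  have hr5 : 5 ≤ r := by omega
  have ne1 : S₁.Nonempty := Finset.card_pos.mp (by omega)
  have ne2 : S₂.Nonempty := Finset.card_pos.mp (by omega)
  set a := S₂.min' ne2 with ha
  set b := S₂.max' ne2 with hb
  set v := S₁.min' ne1 with hv
  set u := S₁.max' ne1 with hu
  have hamem : a ∈ S₂ := S₂.min'_mem ne2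
  have hbmem : b ∈ S₂ := S₂.max'_mem ne2
  have hvmem : v ∈ S₁ := S₁.min'_mem ne1
  have humem : u ∈ S₁ := S₁.max'_mem ne1
  have hS1lt : ∀ x ∈ S₁, x < a := fun x hx => hlt x hx a hamem
  have hS1ge : ∀ x ∈ S₁, 1 ≤ x := fun x hx => (Finset.mem_Icc.mp (h1 hx)).1
  have cS2 : ∀ x ∈ S₂, dbad s r x = dbad s r a := fun x hx => m2 x hx a hamem
  have cS1 : ∀ x ∈ S₁, dbad s r x = dbad s r v := fun x hx => m1 x hx v hvmem
  have fin3 : ∀ z : Fin 3, z = 0 ∨ z = 1 ∨ z = 2 := by decide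
  have d1 : diam S₁ = u - v := diam_eq_s9 ne1
  have d2 : diam S₂ = b - a := diam_eq_s9 ne2
  -- helper to refute S₁ inside a given Icc
  have refute1 : ∀ lo hi : ℕ, hi + 1 - lo < s → (∀ x ∈ S₁, lo ≤ x ∧ x ≤ hi) → False := by
    intro lo hi hcard hsub
    have : S₁ ⊆ Finset.Icc lo hi := fun x hx => Finset.mem_Icc.mpr (hsub x hx)
    have := card_le_of_Icc this
    omega
  -- the color of v, in all cases S₂'s color matters first
  rcases fin3 (dbad s r a) with hca | hca | hca
  · -- color 0
    rcases (dbad_eq0 hs hr1 a).mp hca with haS | haS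
    · -- a < s : S₁ ⊆ [1, a-1]
      exact refute1 1 (a-1) (by omega) (fun x hx => ⟨hS1ge x hx, by have := hS1lt x hx; omega⟩)
    · -- 3s-2 ≤ a < 6s-4
      have hS2sub : S₂ ⊆ Finset.Icc a (6*s-5) := by
        intro x hx
        have hcx := (dbad_eq0 hs hr1 x).mp ((cS2 x hx).trans hca)
        have hax : a ≤ x := S₂.min'_le x hx
        refine Finset.mem_Icc.mpr ⟨hax, ?_⟩
        rcases hcx with h | h <;> omega
      have hacard : r ≤ 6*s-5+1-a := by
        have := card_le_of_Icc hS2sub; omega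
      have hble : b ≤ 6*s-5 := (Finset.mem_Icc.mp (hS2sub hbmem)).2
      -- S₁'s color
      rcases fin3 (dbad s r v) with hcv | hcv | hcv
      · -- color 0 : the interesting case
        set k₂ := (S₁.filter (fun x => 3*s-2 ≤ x)).card with hk2
        set k₁ := (S₁.filter (fun x => ¬ 3*s-2 ≤ x)).card with hk1
        have hks : k₂ + k₁ = s := by
          rw [hk2, hk1, Finset.card_filter_add_card_filter_not, c1]
        have hk2le : k₂ ≤ a - 1 + 1 - (3*s-2) := by
          apply card_le_of_Icc
          intro x hx
          rw [Finset.mem_filter] at hx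
          exact Finset.mem_Icc.mpr ⟨hx.2, by have := hS1lt x hx.1; omega⟩
        by_cases hk2z : k₂ = 0
        · -- all of S₁ below 3s-2, color 0 hence < s
          refine refute1 1 (s-1) (by omega) (fun x hx => ⟨hS1ge x hx, ?_⟩)
          have hxlt : ¬ (3*s-2 ≤ x) := by
            intro hge
            have : x ∈ S₁.filter (fun x => 3*s-2 ≤ x) := Finset.mem_filter.mpr ⟨hx, hge⟩
            rw [hk2, Finset.card_eq_zero] at hk2z
            rw [hk2z] at this
            exact Finset.notMem_empty x this
          have := (dbad_eq0 hs hr1 x).mp ((cS1 x hx).trans hcv)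
          omega
        · -- k₂ ≥ 1 and k₁ ≥ 1
          have hk1pos : 1 ≤ k₁ := by omega
          obtain ⟨w, hwmem⟩ : (S₁.filter (fun x => 3*s-2 ≤ x)).Nonempty :=
            Finset.card_pos.mp (by omega)
          rw [Finset.mem_filter] at hwmem
          have hu2 : 3*s-2 ≤ u := le_trans hwmem.2 (S₁.le_max' w hwmem.1)
          have hage : 3*s-1 ≤ a := by have := hS1lt u humem; omega
          -- k₁ ≤ s - v
          obtain ⟨w1, hw1⟩ : (S₁.filter (fun x => ¬ 3*s-2 ≤ x)).Nonempty :=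
            Finset.card_pos.mp (by omega)
          rw [Finset.mem_filter] at hw1
          have hk1le : k₁ ≤ s-1+1 - v := by
            apply card_le_of_Icc
            intro x hx
            rw [Finset.mem_filter] at hx
            have := (dbad_eq0 hs hr1 x).mp ((cS1 x hx.1).trans hcv)
            exact Finset.mem_Icc.mpr ⟨S₁.min'_le x hx.1, by omega⟩
          have hk2le' : k₂ ≤ u + 1 - (3*s-2) := by
            apply card_le_of_Icc
            intro x hx
            rw [Finset.mem_filter] at hx
            exact Finset.mem_Icc.mpr ⟨hx.2, S₁.le_max' x hx.1⟩
          -- v ≤ s-1 since w1 < s (color 0, below 3s-2)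
          have hvle : v ≤ s-1 := by
            have := (dbad_eq0 hs hr1 w1).mp ((cS1 w1 hw1.1).trans hcv)
            have := S₁.min'_le w1 hw1.1
            omega
          omega
      · -- color 1 : S₁ ⊆ [s, 2s-2]
        refine refute1 s (2*s-2) (by omega) (fun x hx => ?_)
        have := (dbad_eq1 hs hr1 x).mp ((cS1 x hx).trans hcv)
        have := hS1lt x hx
        omega
      · -- color 2 : S₁ ⊆ [2s-1, 3s-3]
        refine refute1 (2*s-1) (3*s-3) (by omega) (fun x hx => ?_)
        have := (dbad_eq2 hs hr1 x).mp ((cS1 x hx).trans hcv)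
        have := hS1lt x hx
        omega
  · -- color 1 : some element of S₂ below 2s-1
    have hy : ∃ y ∈ S₂, y < 2*s-1 := by
      by_contra hno
      push_neg at hno
      have hsub : S₂ ⊆ Finset.Icc (6*s-4) (6*s+r-6) := by
        intro x hx
        have := (dbad_eq1 hs hr1 x).mp ((cS2 x hx).trans hca)
        have := hno x hx
        refine Finset.mem_Icc.mpr (by omega)
      have := card_le_of_Icc hsub
      omega
    obtain ⟨y, hymem, hylt⟩ := hy
    have hS1lt' : ∀ x ∈ S₁, x ≤ 2*s-3 := fun x hx => by have := hlt x hx y hymem; omega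
    rcases fin3 (dbad s r v) with hcv | hcv | hcv
    · refine refute1 1 (s-1) (by omega) (fun x hx => ⟨hS1ge x hx, ?_⟩)
      have := (dbad_eq0 hs hr1 x).mp ((cS1 x hx).trans hcv)
      have := hS1lt' x hx
      omega
    · refine refute1 s (2*s-3) (by omega) (fun x hx => ?_)
      have := (dbad_eq1 hs hr1 x).mp ((cS1 x hx).trans hcv)
      have := hS1lt' x hx
      omega
    · have := (dbad_eq2 hs hr1 v).mp hcv
      have := hS1lt' v hvmem
      omega
  · -- color 2 : some element of S₂ below 3s-2
    have hy : ∃ y ∈ S₂, y < 3*s-2 := by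
      by_contra hno
      push_neg at hno
      have hsub : S₂ ⊆ Finset.Icc (6*s+r-5) n := by
        intro x hx
        have := (dbad_eq2 hs hr1 x).mp ((cS2 x hx).trans hca)
        have := hno x hx
        have := (Finset.mem_Icc.mp (h2 hx)).2
        refine Finset.mem_Icc.mpr (by omega)
      have := card_le_of_Icc hsub
      omega
    obtain ⟨y, hymem, hylt⟩ := hy
    have hS1lt' : ∀ x ∈ S₁, x ≤ 3*s-4 := fun x hx => by have := hlt x hx y hymem; omega
    rcases fin3 (dbad s r v) with hcv | hcv | hcv
    · refine refute1 1 (s-1) (by omega) (fun x hx => ⟨hS1ge x hx, ?_⟩)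
      have := (dbad_eq0 hs hr1 x).mp ((cS1 x hx).trans hcv)
      have := hS1lt' x hx
      omega
    · refine refute1 s (2*s-2) (by omega) (fun x hx => ?_)
      have := (dbad_eq1 hs hr1 x).mp ((cS1 x hx).trans hcv)
      have := hS1lt' x hx
      omega
    · refine refute1 (2*s-1) (3*s-4) (by omega) (fun x hx => ?_)
      have := (dbad_eq2 hs hr1 x).mp ((cS1 x hx).trans hcv)
      have := hS1lt' x hx
      omega

lemma diam_le_of_subset_Icc_s9 {U : Finset ℕ} {lo hi : ℕ} (h : U.Nonempty)
    (hsub : U ⊆ Finset.Icc lo hi) : diam U ≤ hi - lo := by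
  rw [diam_eq_s9 h]
  have h1 := (Finset.mem_Icc.mp (hsub (U.max'_mem h))).2
  have h2 := (Finset.mem_Icc.mp (hsub (U.min'_mem h))).1
  omega

lemma exists_nth_ge (T : Finset ℕ) : ∀ (k : ℕ), k ≠ 0 → k ≤ T.card →
    ∃ a ∈ T, (T.filter fun x => a ≤ x).card = k := by
  induction T using Finset.strongInduction with
  | _ T ih =>
    intro k h1 h2
    have hT : T.Nonempty := Finset.card_pos.mp (by omega)
    rcases eq_or_lt_of_le h2 with heq | hlt
    · refine ⟨T.min' hT, T.min'_mem hT, ?_⟩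
      rw [Finset.filter_true_of_mem (fun x hx => T.min'_le x hx)]; omega
    · set m := T.min' hT with hm
      have hmm : m ∈ T := T.min'_mem hT
      have hcard : (T.erase m).card = T.card - 1 := Finset.card_erase_of_mem hmm
      obtain ⟨a, ha, hfa⟩ := ih (T.erase m) (Finset.erase_ssubset hmm) k h1 (by omega)
      have haT : a ∈ T := Finset.mem_of_mem_erase ha
      refine ⟨a, haT, ?_⟩
      rw [← hfa]
      congr 1
      ext x
      simp only [Finset.mem_filter, Finset.mem_erase]
      constructor
      · rintro ⟨hx, hax⟩
        have hma : m < a := lt_of_le_of_ne (T.min'_le a haT) (fun e => (Finset.ne_of_mem_erase ha) e.symm)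
        exact ⟨⟨by omega, hx⟩, hax⟩
      · rintro ⟨⟨_, hx⟩, hax⟩; exact ⟨hx, hax⟩

lemma exists_nth_le (T : Finset ℕ) : ∀ (k : ℕ), k ≠ 0 → k ≤ T.card →
    ∃ a ∈ T, (T.filter fun x => x ≤ a).card = k := by
  induction T using Finset.strongInduction with
  | _ T ih =>
    intro k h1 h2
    have hT : T.Nonempty := Finset.card_pos.mp (by omega)
    rcases eq_or_lt_of_le h2 with heq | hlt
    · refine ⟨T.max' hT, T.max'_mem hT, ?_⟩
      rw [Finset.filter_true_of_mem (fun x hx => T.le_max' x hx)]; omega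
    · set m := T.max' hT with hm
      have hmm : m ∈ T := T.max'_mem hT
      have hcard : (T.erase m).card = T.card - 1 := Finset.card_erase_of_mem hmm
      obtain ⟨a, ha, hfa⟩ := ih (T.erase m) (Finset.erase_ssubset hmm) k h1 (by omega)
      have haT : a ∈ T := Finset.mem_of_mem_erase ha
      refine ⟨a, haT, ?_⟩
      rw [← hfa]
      congr 1
      ext x
      simp only [Finset.mem_filter, Finset.mem_erase]
      constructor
      · rintro ⟨hx, hax⟩
        have hma : a < m := lt_of_le_of_ne (T.le_max' a haT) (fun e => (Finset.ne_of_mem_erase ha) e)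
        exact ⟨⟨by omega, hx⟩, hax⟩
      · rintro ⟨⟨_, hx⟩, hax⟩; exact ⟨hx, hax⟩

lemma exists_subset_card_min_max (T : Finset ℕ) (k : ℕ) (h2 : 2 ≤ k) (hk : k ≤ T.card)
    (hT : T.Nonempty) :
    ∃ S ⊆ T, S.card = k ∧ T.min' hT ∈ S ∧ T.max' hT ∈ S := by
  have hlt : T.min' hT < T.max' hT := Finset.min'_lt_max'_of_card T (by omega)
  set mn := T.min' hT
  set mx := T.max' hT
  have hcard : ((T.erase mn).erase mx).card = T.card - 2 := by
    rw [Finset.card_erase_of_mem, Finset.card_erase_of_mem (T.min'_mem hT)]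
    · omega
    · exact Finset.mem_erase.mpr ⟨by omega, T.max'_mem hT⟩
  obtain ⟨V, hV, hVc⟩ := Finset.exists_subset_card_eq (n := k - 2) (s := (T.erase mn).erase mx) (by omega)
  have hmnV : mn ∉ V := fun h => by
    have := hV h
    simp only [Finset.mem_erase] at this
    omega
  have hmxV : mx ∉ V := fun h => by
    have := hV h
    simp only [Finset.mem_erase] at this
    exact this.1 rfl
  refine ⟨insert mn (insert mx V), ?_, ?_, ?_, ?_⟩
  · intro x hx
    simp only [Finset.mem_insert] at hx
    rcases hx with rfl | rfl | hx
    · exact T.min'_mem hT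
    · exact T.max'_mem hT
    · exact Finset.mem_of_mem_erase (Finset.mem_of_mem_erase (hV hx))
  · rw [Finset.card_insert_of_notMem, Finset.card_insert_of_notMem hmxV, hVc]
    · omega
    · simp only [Finset.mem_insert]
      push_neg
      exact ⟨by omega, hmnV⟩
  · exact Finset.mem_insert_self _ _
  · exact Finset.mem_insert_of_mem (Finset.mem_insert_self _ _)

lemma upper_s9 (s r : ℕ) (hs : 3 ≤ s) (h1 : 2*s ≤ r+1) (h2 : r+3 ≤ 3*s) (Δ : ℕ → Fin 3)
    (H : ¬ ∃ S₁ S₂ : Finset ℕ,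
      S₁ ⊆ Finset.Icc 1 (6*s+2*r-6) ∧ S₂ ⊆ Finset.Icc 1 (6*s+2*r-6) ∧
      Mono Δ S₁ ∧ Mono Δ S₂ ∧ S₁.card = s ∧ S₂.card = r ∧
      (∀ a ∈ S₁, ∀ b ∈ S₂, a < b) ∧ diam S₁ ≤ diam S₂) : False := by
  have hr5 : 5 ≤ r := by omega
  set N := 6*s+2*r-6 with hN
  set C : Fin 3 → Finset ℕ := fun c => (Finset.Icc 1 N).filter (fun x => Δ x = c) with hC
  have hCsub : ∀ c, C c ⊆ Finset.Icc 1 N := fun c => Finset.filter_subset _ _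
  have hCcol : ∀ c, ∀ x ∈ C c, Δ x = c := fun c x hx => (Finset.mem_filter.mp hx).2
  have hCmono : ∀ c (U : Finset ℕ), U ⊆ C c → Mono Δ U := by
    intro c U hU x hx y hy
    rw [hCcol c x (hU hx), hCcol c y (hU hy)]
  -- P1 : pigeonhole small-diameter mono s-set in [1, 3s-2]
  have P1 : ∃ U : Finset ℕ, U ⊆ Finset.Icc 1 (3*s-2) ∧ Mono Δ U ∧ U.card = s ∧ diam U ≤ 3*s-3 := by
    have hcard : (Finset.Icc 1 (3*s-2)).card = 3*s-2 := by rw [Nat.card_Icc]; omega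
    have hsplit := Finset.card_eq_sum_card_fiberwise
      (f := Δ) (s := Finset.Icc 1 (3*s-2)) (t := Finset.univ) (fun x _ => Finset.mem_univ _)
    rw [Fin.sum_univ_three] at hsplit
    have hex : ∃ c : Fin 3, s ≤ ((Finset.Icc 1 (3*s-2)).filter (fun x => Δ x = c)).card := by
      by_contra hno
      push_neg at hno
      have h0 := hno 0; have h1 := hno 1; have h2 := hno 2
      omega
    obtain ⟨c, hc⟩ := hex
    obtain ⟨U, hUsub, hUcard⟩ := Finset.exists_subset_card_eq hc
    have hUIcc : U ⊆ Finset.Icc 1 (3*s-2) := fun x hx => (Finset.mem_filter.mp (hUsub hx)).1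
    refine ⟨U, hUIcc, ?_, hUcard, ?_⟩
    · intro x hx y hy
      rw [(Finset.mem_filter.mp (hUsub hx)).2, (Finset.mem_filter.mp (hUsub hy)).2]
    · have hne : U.Nonempty := Finset.card_pos.mp (by omega)
      have := diam_le_of_subset_Icc_s9 hne hUIcc
      omega
  -- KB : badness kernel
  have KB : ∀ (c : Fin 3) (x : ℕ), x ∈ C c → r ≤ ((C c).filter (fun y => x ≤ y)).card →
      ∀ U : Finset ℕ, U ⊆ Finset.Icc 1 N → Mono Δ U → U.card = s → (∀ u ∈ U, u < x) →
      ∀ bb ∈ (C c).filter (fun y => x ≤ y), diam U + x ≤ bb → False := by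
    intro c x hxC hrcard U hUsub hUmono hUcard hUlt bb hbb hdiam
    set T := (C c).filter (fun y => x ≤ y) with hT
    have hTne : T.Nonempty := ⟨x, Finset.mem_filter.mpr ⟨hxC, le_refl x⟩⟩
    have hminT : T.min' hTne = x :=
      le_antisymm (Finset.min'_le _ _ (Finset.mem_filter.mpr ⟨hxC, le_refl x⟩))
        (Finset.le_min' _ _ _ (fun y hy => (Finset.mem_filter.mp hy).2))
    obtain ⟨S₂, hS₂T, hS₂card, hminS₂, hmaxS₂⟩ := exists_subset_card_min_max T r (by omega) hrcard hTne
    have hS₂C : S₂ ⊆ C c := hS₂T.trans (Finset.filter_subset _ _)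
    have hS₂ne : S₂.Nonempty := ⟨_, hminS₂⟩
    have hmax2 : S₂.max' hS₂ne = T.max' hTne :=
      le_antisymm (Finset.max'_le _ _ _ (fun y hy => Finset.le_max' _ y (hS₂T hy)))
        (Finset.le_max' _ _ hmaxS₂)
    have hmin2 : S₂.min' hS₂ne = x := by
      refine le_antisymm ?_ ?_
      · rw [← hminT]; exact Finset.min'_le _ _ hminS₂
      · exact Finset.le_min' _ _ _ (fun y hy => (Finset.mem_filter.mp (hS₂T hy)).2)
    have hdS₂ : diam S₂ = T.max' hTne - x := by rw [diam_eq_s9 hS₂ne, hmax2, hmin2]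
    have hbble : bb ≤ T.max' hTne := Finset.le_max' _ bb hbb
    exact H ⟨U, S₂, hUsub, hS₂C.trans (hCsub c), hUmono, hCmono c S₂ hS₂C, hUcard, hS₂card,
      fun p hp q hq => lt_of_lt_of_le (hUlt p hp) (by rw [← hmin2]; exact S₂.min'_le q hq),
      by omega⟩
  -- CONS : structural consequence
  have CONS : ∀ (c : Fin 3) (x : ℕ), x ∈ C c → 3*s-1 ≤ x →
      r ≤ ((C c).filter (fun y => x ≤ y)).card →
      ∀ bb ∈ (C c).filter (fun y => x ≤ y), bb ≤ x + (3*s-4) := by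
    intro c x hxC hx3 hr bb hbb
    by_contra hgt
    push_neg at hgt
    obtain ⟨U, hU1, hU2, hU3, hU4⟩ := P1
    refine KB c x hxC hr U (hU1.trans (Finset.Icc_subset_Icc_right (by omega))) hU2 hU3
      (fun u hu => by have := (Finset.mem_Icc.mp (hU1 hu)).2; omega) bb hbb (by omega)
  -- counts
  have hCsum : (C 0).card + (C 1).card + (C 2).card = N := by
    have hsplit := Finset.card_eq_sum_card_fiberwise
      (f := Δ) (s := Finset.Icc 1 N) (t := Finset.univ) (fun x _ => Finset.mem_univ _)
    rw [Fin.sum_univ_three] at hsplit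
    have : (Finset.Icc 1 N).card = N := by rw [Nat.card_Icc]; omega
    simp only [hC]
    omega
  have hφsum : ((C 0).filter (fun x => 3*s-1 ≤ x)).card + ((C 1).filter (fun x => 3*s-1 ≤ x)).card
      + ((C 2).filter (fun x => 3*s-1 ≤ x)).card = N - (3*s-2) := by
    have hsplit := Finset.card_eq_sum_card_fiberwise
      (f := Δ) (s := Finset.Icc (3*s-1) N) (t := Finset.univ) (fun x _ => Finset.mem_univ _)
    rw [Fin.sum_univ_three] at hsplit
    have hfib : ∀ c : Fin 3, (Finset.Icc (3*s-1) N).filter (fun x => Δ x = c)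
        = (C c).filter (fun x => 3*s-1 ≤ x) := by
      intro c
      ext x
      simp only [hC, Finset.mem_filter, Finset.mem_Icc]
      constructor
      · rintro ⟨⟨hx1, hx2⟩, hx3⟩
        exact ⟨⟨⟨by omega, hx2⟩, hx3⟩, hx1⟩
      · rintro ⟨⟨⟨hx1, hx2⟩, hx3⟩, hx4⟩
        exact ⟨⟨hx4, hx2⟩, hx3⟩
    rw [hfib 0, hfib 1, hfib 2] at hsplit
    rw [Nat.card_Icc] at hsplit
    omega
  -- the TAP predicate
  set TAP : Fin 3 → Prop :=
    fun c => ∃ x ∈ C c, ((C c).filter (fun y => x ≤ y)).card = r ∧ 3*s-1 ≤ x with hTAP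
  by_cases hAB : ∃ c c' : Fin 3, c ≠ c' ∧ TAP c ∧ TAP c'
  · -- main geometric case
    have core : ∀ (c c' : Fin 3), c ≠ c' → ∀ a a' : ℕ, a ∈ C c → a' ∈ C c' →
        ((C c).filter (fun y => a ≤ y)).card = r →
        ((C c').filter (fun y => a' ≤ y)).card = r →
        3*s-1 ≤ a → 3*s-1 ≤ a' → a ≤ a' → False := by
      intro c c' hcc a a' haC ha'C har ha'r haTA ha'TA hle
      set T := (C c).filter (fun y => a ≤ y) with hT
      set T' := (C c').filter (fun y => a' ≤ y) with hT'
      have hTne : T.Nonempty := ⟨a, Finset.mem_filter.mpr ⟨haC, le_refl a⟩⟩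
      have hT'ne : T'.Nonempty := ⟨a', Finset.mem_filter.mpr ⟨ha'C, le_refl a'⟩⟩
      set b := T.max' hTne with hb
      set b' := T'.max' hT'ne with hb'
      have hbT : b ∈ T := T.max'_mem hTne
      have hb'T : b' ∈ T' := T'.max'_mem hT'ne
      have hTsub : T ⊆ Finset.Icc a b :=
        fun y hy => Finset.mem_Icc.mpr ⟨(Finset.mem_filter.mp hy).2, Finset.le_max' _ y hy⟩
      have hT'sub : T' ⊆ Finset.Icc a' b' :=
        fun y hy => Finset.mem_Icc.mpr ⟨(Finset.mem_filter.mp hy).2, Finset.le_max' _ y hy⟩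
      have hrb : r ≤ b + 1 - a := by
        have := card_le_of_Icc hTsub; omega
      have hrb' : r ≤ b' + 1 - a' := by
        have := card_le_of_Icc hT'sub; omega
      have hbbound : b ≤ a + (3*s-4) := CONS c a haC haTA (le_of_eq har.symm) b hbT
      have hb'bound : b' ≤ a' + (3*s-4) := CONS c' a' ha'C ha'TA (le_of_eq ha'r.symm) b' hb'T
      have hdisj : Disjoint (C c) (C c') := by
        rw [Finset.disjoint_left]
        intro x hx hx'
        exact hcc ((hCcol c x hx).symm.trans (hCcol c' x hx'))
      have hminT' : T'.min' hT'ne = a' :=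
        le_antisymm (Finset.min'_le _ _ (Finset.mem_filter.mpr ⟨ha'C, le_refl a'⟩))
          (Finset.le_min' _ _ _ (fun y hy => (Finset.mem_filter.mp hy).2))
      have hdiamT' : diam T' = b' - a' := by rw [diam_eq_s9 hT'ne, hminT']
      by_cases hcase : b < a'
      · -- disjoint clusters : win with a low-diameter s-subset of T
        have hwin : ∃ U : Finset ℕ, U ⊆ T ∧ U.card = s ∧ diam U ≤ 2*s-2 := by
          obtain ⟨w, hwT, hwcard⟩ := exists_nth_le T s (by omega) (by omega)
          have hwa : a ≤ w := (Finset.mem_filter.mp hwT).2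
          have hwb : w ≤ b := Finset.le_max' _ w hwT
          by_cases hw2 : w ≤ a + (2*s-2)
          · refine ⟨T.filter (fun x => x ≤ w), Finset.filter_subset _ _, hwcard, ?_⟩
            have hne : (T.filter (fun x => x ≤ w)).Nonempty :=
              ⟨w, Finset.mem_filter.mpr ⟨hwT, le_refl w⟩⟩
            have := diam_le_of_subset_Icc_s9 hne (fun x hx => Finset.mem_Icc.mpr
              ⟨(Finset.mem_filter.mp ((Finset.filter_subset _ _) hx)).2, (Finset.mem_filter.mp hx).2⟩)
            omega
          · have hT2card : r - s + 1 ≤ (T.filter (fun x => w ≤ x)).card := by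
              have hsplitc := Finset.card_filter_add_card_filter_not
                (s := T) (p := fun x => x ≤ w)
              have hsub2 : T.filter (fun x => ¬ x ≤ w) ⊆ (T.filter (fun x => w ≤ x)).erase w := by
                intro y hy
                rw [Finset.mem_filter] at hy
                exact Finset.mem_erase.mpr ⟨by omega, Finset.mem_filter.mpr ⟨hy.1, by omega⟩⟩
              have hcsub := Finset.card_le_card hsub2
              have hwmem : w ∈ T.filter (fun x => w ≤ x) := Finset.mem_filter.mpr ⟨hwT, le_refl w⟩
              rw [Finset.card_erase_of_mem hwmem] at hcsub
              have : (T.filter (fun x => w ≤ x)).card ≠ 0 := Finset.card_ne_zero_of_mem hwmem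
              omega
            obtain ⟨U, hUsub, hUcard⟩ := Finset.exists_subset_card_eq
              (n := s) (s := T.filter (fun x => w ≤ x)) (by omega)
            refine ⟨U, hUsub.trans (Finset.filter_subset _ _), hUcard, ?_⟩
            have hne : U.Nonempty := Finset.card_pos.mp (by omega)
            have hUIcc : U ⊆ Finset.Icc w b := fun x hx => Finset.mem_Icc.mpr
              ⟨(Finset.mem_filter.mp (hUsub hx)).2,
               Finset.le_max' _ x ((Finset.filter_subset _ _) (hUsub hx))⟩
            have := diam_le_of_subset_Icc_s9 hne hUIcc
            omega
        obtain ⟨U, hUT, hUc, hUd⟩ := hwin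
        have hUCc : U ⊆ C c := hUT.trans (Finset.filter_subset _ _)
        exact H ⟨U, T', hUCc.trans (hCsub c), (Finset.filter_subset _ _).trans (hCsub c'),
          hCmono c U hUCc, hCmono c' T' (Finset.filter_subset _ _), hUc, ha'r,
          fun p hp q hq => by
            have hpb : p ≤ b := (Finset.mem_Icc.mp (hTsub (hUT hp))).2
            have hq' : a' ≤ q := (Finset.mem_filter.mp hq).2
            omega,
          by rw [hdiamT']; omega⟩
      · by_cases hnest : b' < b
        · -- nesting : 2r points inside [a, b]
          have hsub' : T' ⊆ Finset.Icc a b := fun y hy => by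
            have := Finset.mem_Icc.mp (hT'sub hy)
            exact Finset.mem_Icc.mpr ⟨by omega, by omega⟩
          have hdisj2 : Disjoint T T' :=
            hdisj.mono (Finset.filter_subset _ _) (Finset.filter_subset _ _)
          have := card_le_of_Icc (Finset.union_subset hTsub hsub')
          rw [Finset.card_union_of_disjoint hdisj2, har, ha'r] at this
          omega
        · -- overlapping clusters, b ≤ b'
          set F1 := T.filter (fun x => a' ≤ x) with hF1
          set F2 := T.filter (fun x => ¬ a' ≤ x) with hF2
          have hsplitT : F1.card + F2.card = r := by
            rw [hF1, hF2, Finset.card_filter_add_card_filter_not, har]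
          have hqbound : F1.card + r ≤ b' + 1 - a' := by
            have hsubU : F1 ∪ T' ⊆ Finset.Icc a' b' := by
              apply Finset.union_subset
              · intro y hy
                rw [hF1, Finset.mem_filter] at hy
                refine Finset.mem_Icc.mpr ⟨hy.2, ?_⟩
                have : y ≤ b := (Finset.mem_Icc.mp (hTsub hy.1)).2
                omega
              · exact hT'sub
            have hdisj3 : Disjoint F1 T' :=
              hdisj.mono ((hF1 ▸ Finset.filter_subset _ _).trans (Finset.filter_subset _ _))
                (Finset.filter_subset _ _)
            have hcu := card_le_of_Icc hsubU
            rw [Finset.card_union_of_disjoint hdisj3, ha'r] at hcu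
            omega
          by_cases hts : F2.card ≤ s-1
          · omega
          · obtain ⟨w, hwY, hwc⟩ := exists_nth_ge F2 s (by omega) (by omega)
            have hF2T : F2 ⊆ T := hF2 ▸ Finset.filter_subset _ _
            have hwa : a ≤ w := (Finset.mem_filter.mp (hF2T hwY)).2
            set U := F2.filter (fun x => w ≤ x) with hU
            have hUF2 : U ⊆ F2 := hU ▸ Finset.filter_subset _ _
            have hUCc : U ⊆ C c := (hUF2.trans hF2T).trans (Finset.filter_subset _ _)
            have hUlt : ∀ u ∈ U, u < a' := fun u hu => by
              have hu2 := (Finset.mem_filter.mp (hUF2 hu))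
              have := (Finset.mem_filter.mp (hUF2 hu)).1
              have : ¬ a' ≤ u := by
                have := hUF2 hu
                rw [hF2, Finset.mem_filter] at this
                exact this.2
              omega
            have hdU : ¬ (diam U + a' ≤ b') := fun hcontra =>
              KB c' a' ha'C (le_of_eq ha'r.symm) U (hUCc.trans (hCsub c))
                (hCmono c U hUCc) hwc hUlt b' hb'T hcontra
            have hUne : U.Nonempty := ⟨w, Finset.mem_filter.mpr ⟨hwY, le_refl w⟩⟩
            have hdUle : diam U ≤ (a'-1) - w := by
              have hUIcc : U ⊆ Finset.Icc w (a'-1) := by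
                intro x hx
                refine Finset.mem_Icc.mpr ⟨?_, ?_⟩
                · have := hU ▸ hx
                  exact (Finset.mem_filter.mp (hU ▸ hx)).2
                · have := hUlt x hx
                  omega
              exact diam_le_of_subset_Icc_s9 hUne hUIcc
            have hwlow : F2.card - s ≤ w - a := by
              have hsplitY : U.card + (F2.filter (fun x => ¬ w ≤ x)).card = F2.card := by
                rw [hU, Finset.card_filter_add_card_filter_not]
              have hsubw : F2.filter (fun x => ¬ w ≤ x) ⊆ Finset.Icc a (w-1) := by
                intro x hx
                rw [Finset.mem_filter] at hx
                refine Finset.mem_Icc.mpr ⟨(Finset.mem_filter.mp (hF2T hx.1)).2, by omega⟩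
              have hc2 := card_le_of_Icc hsubw
              have hUcards : U.card = s := hwc
              omega
            omega
    obtain ⟨c, c', hcc, ⟨x, hxC, hxr, hxTA⟩, ⟨x', hx'C, hx'r, hx'TA⟩⟩ := hAB
    rcases le_total x x' with hxx | hxx
    · exact core c c' hcc x x' hxC hx'C hxr hx'r hxTA hx'TA hxx
    · exact core c' c hcc.symm x' x hx'C hxC hx'r hxr hx'TA hxTA hxx
  · -- counting case
    have hφbound : ∀ c : Fin 3,
        ((C c).filter (fun x => 3*s-1 ≤ x)).card ≤ r-1 ∨
        (TAP c ∧ ((C c).filter (fun x => 3*s-1 ≤ x)).card ≤ 3*s-3) := by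
      intro c
      by_cases hlight : (C c).card < r
      · left
        have := Finset.card_le_card (Finset.filter_subset (fun x => 3*s-1 ≤ x) (C c))
        omega
      · obtain ⟨x, hxC, hxcard⟩ := exists_nth_ge (C c) r (by omega) (by omega)
        by_cases hha : x ≤ 3*s-2
        · left
          have hsub : (C c).filter (fun y => 3*s-1 ≤ y) ⊆ ((C c).filter (fun y => x ≤ y)).erase x := by
            intro y hy
            rw [Finset.mem_filter] at hy
            exact Finset.mem_erase.mpr ⟨by omega, Finset.mem_filter.mpr ⟨hy.1, by omega⟩⟩
          have := Finset.card_le_card hsub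
          rw [Finset.card_erase_of_mem (Finset.mem_filter.mpr ⟨hxC, le_refl x⟩), hxcard] at this
          omega
        · right
          refine ⟨⟨x, hxC, hxcard, by omega⟩, ?_⟩
          set T := (C c).filter (fun y => x ≤ y) with hT
          have hTne : T.Nonempty := ⟨x, Finset.mem_filter.mpr ⟨hxC, le_refl x⟩⟩
          set b := T.max' hTne with hbdef
          have hbT : b ∈ T := T.max'_mem hTne
          have hTsub : T ⊆ Finset.Icc x b :=
            fun y hy => Finset.mem_Icc.mpr ⟨(Finset.mem_filter.mp hy).2, Finset.le_max' _ y hy⟩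
          have hrb : r ≤ b + 1 - x := by
            have := card_le_of_Icc hTsub; omega
          have hF := Finset.card_filter_add_card_filter_not
            (s := (C c).filter (fun y => 3*s-1 ≤ y)) (p := fun y => y ≤ x)
          -- upper part
          have hup : ((C c).filter (fun y => 3*s-1 ≤ y)).filter (fun y => ¬ y ≤ x) ⊆ T.erase x := by
            intro y hy
            rw [Finset.mem_filter, Finset.mem_filter] at hy
            exact Finset.mem_erase.mpr ⟨by omega, Finset.mem_filter.mpr ⟨hy.1.1, by omega⟩⟩
          have hupc := Finset.card_le_card hup
          rw [Finset.card_erase_of_mem (Finset.mem_filter.mpr ⟨hxC, le_refl x⟩), hxcard] at hupc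
          -- lower part
          have hlow : ((C c).filter (fun y => 3*s-1 ≤ y)).filter (fun y => y ≤ x)
              ⊆ Finset.Icc (b - (3*s-4)) x := by
            intro y hy
            rw [Finset.mem_filter, Finset.mem_filter] at hy
            obtain ⟨⟨hyC, hy3⟩, hyx⟩ := hy
            have hsubfil : T ⊆ (C c).filter (fun z => y ≤ z) := by
              intro z hz
              rw [hT, Finset.mem_filter] at hz
              rw [Finset.mem_filter]
              exact ⟨hz.1, by omega⟩
            have hycard : r ≤ ((C c).filter (fun z => y ≤ z)).card := by
              have := Finset.card_le_card hsubfil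
              omega
            have hbmem : b ∈ (C c).filter (fun z => y ≤ z) := by
              rw [Finset.mem_filter]
              refine ⟨(Finset.mem_filter.mp hbT).1, ?_⟩
              have := (Finset.mem_filter.mp hbT).2
              omega
            have := CONS c y hyC hy3 hycard b hbmem
            exact Finset.mem_Icc.mpr ⟨by omega, hyx⟩
          have hlowc := card_le_of_Icc hlow
          omega
    rcases hφbound 0 with hb0 | ⟨ht0, hb0⟩ <;>
      rcases hφbound 1 with hb1 | ⟨ht1, hb1⟩ <;>
        rcases hφbound 2 with hb2 | ⟨ht2, hb2⟩
    · omega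
    · omega
    · omega
    · exact hAB ⟨1, 2, by decide, ht1, ht2⟩
    · omega
    · exact hAB ⟨0, 2, by decide, ht0, ht2⟩
    · exact hAB ⟨0, 1, by decide, ht0, ht1⟩
    · exact hAB ⟨0, 1, by decide, ht0, ht1⟩

theorem stmt9 (s r : ℕ) (hs : 3 ≤ s) (hsr : s ≤ r)
    (hr1 : 2 * s - 2 < r) (hr2 : r ≤ 3 * s - 3) :
    IsLeast {n : ℕ | ∀ Δ : ℕ → Fin 3, ∃ S₁ S₂ : Finset ℕ,
    S₁ ⊆ Finset.Icc 1 n ∧ S₂ ⊆ Finset.Icc 1 n ∧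
    Mono Δ S₁ ∧ Mono Δ S₂ ∧ S₁.card = s ∧ S₂.card = r ∧
    (∀ a ∈ S₁, ∀ b ∈ S₂, a < b) ∧ diam S₁ ≤ diam S₂} (6 * s + 2 * r - 6) := by
  constructor
  · intro Δ
    by_contra hno
    exact upper_s9 s r hs (by omega) (by omega) Δ hno
  · intro n hn
    by_contra hlt
    push_neg at hlt
    obtain ⟨S₁, S₂, hs1, hs2, hm1, hm2, hc1, hc2, ho, hd⟩ := hn (dbad s r)
    exact lower_no_pair s r n hs (by omega) (by omega) S₁ S₂ hs1 hs2 hm1 hm2 hc1 hc2 ho hd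
end

section
/- For integers r ≥ s ≥ 2 with r > 3s − 3, the minimum n such that every 3-coloring of [1,n] admits monochromatic subsets S₁, S₂ with |S₁| = s, |S₂| = r, max(S₁) < min(S₂), and diam(S₁) ≤ diam(S₂), equals 3s + 3r − 4. -/
open Finset

lemma pred_card_le_diam (S : Finset ℕ) : S.card - 1 ≤ diam S := by
  rcases S.eq_empty_or_nonempty with rfl | hne
  · have : diam ∅ = 0 := rfl
    simp [this]
  · have hsub : S ⊆ Finset.Icc (S.min' hne) (S.max' hne) := by
      intro x hx
      simp only [mem_Icc]
      exact ⟨S.min'_le x hx, S.le_max' x hx⟩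
    have := Finset.card_le_card hsub
    rw [Nat.card_Icc] at this
    rw [diam_eq S hne]
    omega

/-- The extremal coloring witnessing the lower bound. -/
def lowerColoring (s r : ℕ) : ℕ → Fin 3 := fun x =>
  if x < s ∨ (3*s-2 ≤ x ∧ x ≤ 3*s+r-3) then 0
  else if x ≤ 2*s-2 ∨ (3*s+r-2 ≤ x ∧ x ≤ 3*s+2*r-4) then 1
  else 2

lemma lc0 {s r x : ℕ} (h : lowerColoring s r x = 0) :
    x < s ∨ (3*s-2 ≤ x ∧ x ≤ 3*s+r-3) := by
  unfold lowerColoring at h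
  split_ifs at h with h1 h2
  · exact h1
  · exact absurd h (by decide)
  · exact absurd h (by decide)

lemma lc1 {s r x : ℕ} (h : lowerColoring s r x = 1) :
    ¬(x < s ∨ (3*s-2 ≤ x ∧ x ≤ 3*s+r-3)) ∧
    (x ≤ 2*s-2 ∨ (3*s+r-2 ≤ x ∧ x ≤ 3*s+2*r-4)) := by
  unfold lowerColoring at h
  split_ifs at h with h1 h2
  · exact absurd h (by decide)
  · exact ⟨h1, h2⟩
  · exact absurd h (by decide)

lemma lc2 {s r x : ℕ} (h : lowerColoring s r x = 2) :
    ¬(x < s ∨ (3*s-2 ≤ x ∧ x ≤ 3*s+r-3)) ∧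
    ¬(x ≤ 2*s-2 ∨ (3*s+r-2 ≤ x ∧ x ≤ 3*s+2*r-4)) := by
  unfold lowerColoring at h
  split_ifs at h with h1 h2
  · exact absurd h (by decide)
  · exact absurd h (by decide)
  · exact ⟨h1, h2⟩

/-- pigeonhole helper -/
lemma pigeon (A : Finset ℕ) (Δ : ℕ → Fin 3) (k : ℕ) (hA : 3 * k < A.card) :
    ∃ c : Fin 3, k < (A.filter fun x => Δ x = c).card := by
  have hmap : ∀ a ∈ A, Δ a ∈ (Finset.univ : Finset (Fin 3)) := fun a _ => mem_univ _
  have hcard : (Finset.univ : Finset (Fin 3)).card * k < A.card := by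
    simpa using hA
  obtain ⟨c, _, hc⟩ := Finset.exists_lt_card_fiber_of_mul_lt_card_of_maps_to hmap hcard
  exact ⟨c, hc⟩

theorem stmt10 (s r : ℕ) (hs : 2 ≤ s) (hsr : s ≤ r) (hr : 3 * s - 3 < r) :
    IsLeast {n : ℕ | ∀ Δ : ℕ → Fin 3, ∃ S₁ S₂ : Finset ℕ,
    S₁ ⊆ Finset.Icc 1 n ∧ S₂ ⊆ Finset.Icc 1 n ∧
    Mono Δ S₁ ∧ Mono Δ S₂ ∧ S₁.card = s ∧ S₂.card = r ∧
    (∀ a ∈ S₁, ∀ b ∈ S₂, a < b) ∧ diam S₁ ≤ diam S₂} (3 * s + 3 * r - 4) := by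
  constructor
  · -- membership: every 3-coloring of [1, 3s+3r-4] has the configuration
    intro Δ
    -- first block [1, 3s-2]
    have hp1 : ∃ c : Fin 3, s - 1 < ((Finset.Icc 1 (3*s-2)).filter fun x => Δ x = c).card := by
      apply pigeon
      rw [Nat.card_Icc]; omega
    obtain ⟨c₁, hc₁⟩ := hp1
    obtain ⟨S₁, hS₁sub, hS₁card⟩ :=
      Finset.exists_subset_card_eq (show s ≤ _ by omega : s ≤ ((Finset.Icc 1 (3*s-2)).filter fun x => Δ x = c₁).card)
    -- second block [3s-1, 3s+3r-4]
    have hp2 : ∃ c : Fin 3, r - 1 < ((Finset.Icc (3*s-1) (3*s+3*r-4)).filter fun x => Δ x = c).card := by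
      apply pigeon
      rw [Nat.card_Icc]; omega
    obtain ⟨c₂, hc₂⟩ := hp2
    obtain ⟨S₂, hS₂sub, hS₂card⟩ :=
      Finset.exists_subset_card_eq (show r ≤ _ by omega : r ≤ ((Finset.Icc (3*s-1) (3*s+3*r-4)).filter fun x => Δ x = c₂).card)
    have hS₁Icc : S₁ ⊆ Finset.Icc 1 (3*s-2) := hS₁sub.trans (filter_subset _ _)
    have hS₂Icc : S₂ ⊆ Finset.Icc (3*s-1) (3*s+3*r-4) := hS₂sub.trans (filter_subset _ _)
    refine ⟨S₁, S₂, ?_, ?_, ?_, ?_, hS₁card, hS₂card, ?_, ?_⟩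
    · refine hS₁Icc.trans (Finset.Icc_subset_Icc le_rfl ?_); omega
    · refine hS₂Icc.trans (Finset.Icc_subset_Icc ?_ le_rfl); omega
    · intro a ha b hb
      have ha' := (mem_filter.mp (hS₁sub ha)).2
      have hb' := (mem_filter.mp (hS₁sub hb)).2
      rw [ha', hb']
    · intro a ha b hb
      have ha' := (mem_filter.mp (hS₂sub ha)).2
      have hb' := (mem_filter.mp (hS₂sub hb)).2
      rw [ha', hb']
    · intro a ha b hb
      have ha' := mem_Icc.mp (hS₁Icc ha)
      have hb' := mem_Icc.mp (hS₂Icc hb)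
      omega
    · have h1 : diam S₁ ≤ 3*s-2-1 := diam_le_of_subset_Icc hS₁Icc
      have h2 : r - 1 ≤ diam S₂ := hS₂card ▸ pred_card_le_diam S₂
      omega
  · -- lower bound
    intro n hn
    by_contra hlt
    push_neg at hlt
    have hn5 : n ≤ 3*s+3*r-5 := by omega
    obtain ⟨S₁, S₂, hS₁sub, hS₂sub, hM₁, hM₂, hcard₁, hcard₂, hlt₁₂, _⟩ := hn (lowerColoring s r)
    -- bounds on elements
    have hS₁b : ∀ a ∈ S₁, 1 ≤ a ∧ a ≤ 3*s+3*r-5 := by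
      intro a ha; have := mem_Icc.mp (hS₁sub ha); omega
    have hS₂b : ∀ a ∈ S₂, 1 ≤ a ∧ a ≤ 3*s+3*r-5 := by
      intro a ha; have := mem_Icc.mp (hS₂sub ha); omega
    have hS₂ne : S₂.Nonempty := by
      rw [← Finset.card_pos, hcard₂]; omega
    obtain ⟨y₀, hy₀⟩ := hS₂ne
    -- find b ∈ S₂ with b ≤ 3s-2
    have hbex : ∃ b ∈ S₂, b ≤ 3*s-2 := by
      have hcol : ∀ x ∈ S₂, lowerColoring s r x = lowerColoring s r y₀ := fun x hx => hM₂ x hx y₀ hy₀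
      have hclt := (lowerColoring s r y₀).isLt
      have hcv : (lowerColoring s r y₀).val = 0 ∨ (lowerColoring s r y₀).val = 1 ∨
          (lowerColoring s r y₀).val = 2 := by omega
      rcases hcv with hcv | hcv | hcv
      · -- color 0
        by_cases hsmall : ∃ b ∈ S₂, b < s
        · obtain ⟨b, hb, hbs⟩ := hsmall; exact ⟨b, hb, by omega⟩
        · push_neg at hsmall
          have hsub' : S₂ ⊆ Finset.Icc (3*s-2) (3*s+r-3) := by
            intro x hx
            have h0 := lc0 ((hcol x hx).trans (Fin.ext hcv))
            have := hsmall x hx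
            simp only [mem_Icc]
            omega
          have hcardIcc : (Finset.Icc (3*s-2) (3*s+r-3)).card ≤ S₂.card := by
            rw [Nat.card_Icc, hcard₂]; omega
          have heq := Finset.eq_of_subset_of_card_le hsub' hcardIcc
          refine ⟨3*s-2, ?_, le_rfl⟩
          rw [heq]
          simp only [mem_Icc]
          omega
      · -- color 1
        have hnot : ¬ S₂ ⊆ Finset.Icc (3*s+r-2) (3*s+2*r-4) := by
          intro hsub'
          have := Finset.card_le_card hsub'
          rw [Nat.card_Icc, hcard₂] at this
          omega
        obtain ⟨b, hb, hbn⟩ := Finset.not_subset.mp hnot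
        have h1 := lc1 ((hcol b hb).trans (Fin.ext hcv))
        simp only [mem_Icc, not_and, not_le] at hbn
        refine ⟨b, hb, by omega⟩
      · -- color 2
        have hnot : ¬ S₂ ⊆ Finset.Icc (3*s+2*r-3) (3*s+3*r-5) := by
          intro hsub'
          have := Finset.card_le_card hsub'
          rw [Nat.card_Icc, hcard₂] at this
          omega
        obtain ⟨b, hb, hbn⟩ := Finset.not_subset.mp hnot
        have h2 := lc2 ((hcol b hb).trans (Fin.ext hcv))
        have hbb := hS₂b b hb
        simp only [mem_Icc, not_and, not_le] at hbn
        refine ⟨b, hb, by omega⟩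
    obtain ⟨b, hbS₂, hble⟩ := hbex
    -- hence S₁ ⊆ [1, 3s-3]
    have hS₁small : ∀ a ∈ S₁, a ≤ 3*s-3 := by
      intro a ha
      have := hlt₁₂ a ha b hbS₂
      omega
    have hS₁ne : S₁.Nonempty := by
      rw [← Finset.card_pos, hcard₁]; omega
    obtain ⟨a₀, ha₀⟩ := hS₁ne
    have hcol₁ : ∀ x ∈ S₁, lowerColoring s r x = lowerColoring s r a₀ := fun x hx => hM₁ x hx a₀ ha₀
    have hclt₁ := (lowerColoring s r a₀).isLt
    have hcv₁ : (lowerColoring s r a₀).val = 0 ∨ (lowerColoring s r a₀).val = 1 ∨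
        (lowerColoring s r a₀).val = 2 := by omega
    -- in each case S₁ fits in an interval of s-1 integers
    have hfinal : ∃ lo hi : ℕ, hi + 1 - lo ≤ s - 1 ∧ S₁ ⊆ Finset.Icc lo hi := by
      rcases hcv₁ with hcv₁ | hcv₁ | hcv₁
      · refine ⟨1, s-1, by omega, ?_⟩
        intro x hx
        have h0 := lc0 ((hcol₁ x hx).trans (Fin.ext hcv₁))
        have := hS₁small x hx
        have := hS₁b x hx
        simp only [mem_Icc]
        omega
      · refine ⟨s, 2*s-2, by omega, ?_⟩
        intro x hx
        have h1 := lc1 ((hcol₁ x hx).trans (Fin.ext hcv₁))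
        have := hS₁small x hx
        have := hS₁b x hx
        simp only [mem_Icc]
        omega
      · refine ⟨2*s-1, 3*s-3, by omega, ?_⟩
        intro x hx
        have h2 := lc2 ((hcol₁ x hx).trans (Fin.ext hcv₁))
        have := hS₁small x hx
        have := hS₁b x hx
        simp only [mem_Icc]
        omega
    obtain ⟨lo, hi, hlohi, hsub'⟩ := hfinal
    have := Finset.card_le_card hsub'
    rw [Nat.card_Icc, hcard₁] at this
    omega
end
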